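/- arXiv:2201.12081 — 2 statements merged into one kernel-verified Lean document; each statement's English description precedes it below -/
import Mathlib

section
/- Let F : (1,∞) → ℝ³ be differentiable and suppose F'(λ) = −λ⁻¹ F(λ) + r(λ) + h(λ) for all λ > 1, where r, h : (1,∞) → ℝ³ are measurable, λ·|r(λ)| → 0 as λ → ∞, and ∫₁^∞ |h(λ)| dλ < ∞. Then F(λ) → 0 as λ → ∞. (This is the integration step concluding the proof of Lemma E.1 of the paper.) -/
open MeasureTheory Filter

noncomputable section

abbrev E3 : Type := EuclideanSpace ℝ (Fin 3)

/-! Multiplying by the integrating factor `λ` turns the equation into `(λ F)' = λ (r + h)`, so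
`F b = b⁻¹ c F(c) + b⁻¹ ∫_c^b s r(s) ds + b⁻¹ ∫_c^b s h(s) ds` for a suitable base point `c`.
The middle term is a Cesàro mean of `s r(s) → 0`. In the last one the weight `s / b ≤ 1` tends to
`0` pointwise, so dominated convergence by `|h|` applies. -/

open Set Topology Asymptotics

variable {E : Type*} [NormedAddCommGroup E]

theorem MeasureTheory.LocallyIntegrableOn.intervalIntegrable_of_Ici {g : ℝ → E} {a b c : ℝ}
    (hg : LocallyIntegrableOn g (Ici a)) (hb : a ≤ b) (hc : a ≤ c) :
    IntervalIntegrable g volume b c :=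
  (hg.integrableOn_compact_subset (fun _ hx ↦ (le_min hb hc).trans hx.1)
    isCompact_uIcc).intervalIntegrable

theorem locallyIntegrableOn_Ici_of_norm_le {g : ℝ → E} {a C : ℝ}
    (hg : AEStronglyMeasurable g) (hC : ∀ s ≥ a, ‖g s‖ ≤ C) :
    LocallyIntegrableOn g (Ici a) := by
  refine (locallyIntegrableOn_iff isClosed_Ici.isLocallyClosed).2 fun k hk hk_cpt ↦ ?_
  exact Measure.integrableOn_of_bounded hk_cpt.measure_lt_top.ne hg
    (ae_restrict_of_forall_mem hk_cpt.measurableSet fun s hs ↦ hC s (hk hs))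

variable [NormedSpace ℝ E]

theorem tendsto_inv_smul_intervalIntegral_of_tendsto_zero {g : ℝ → E} {a : ℝ}
    (hg_int : LocallyIntegrableOn g (Ici a)) (hg : Tendsto g atTop (𝓝 0)) :
    Tendsto (fun b ↦ b⁻¹ • ∫ s in a..b, g s) atTop (𝓝 0) := by
  suffices (fun b ↦ ∫ s in a..b, g s) =o[atTop] id from this.tendsto_inv_smul_nhds_zero
  refine isLittleO_iff.2 fun ε hε ↦ ?_
  obtain ⟨M, hM⟩ := eventually_atTop.1 <|
    (hg.eventually (Metric.closedBall_mem_nhds 0 (half_pos hε))).and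
      (eventually_ge_atTop (max a 0))
  have haM : a ≤ M := (le_max_left _ _).trans (hM M le_rfl).2
  have hM0 : 0 ≤ M := (le_max_right _ _).trans (hM M le_rfl).2
  filter_upwards [isLittleO_iff.1 (isLittleO_const_id_atTop (∫ s in a..M, g s)) (half_pos hε),
    eventually_ge_atTop M] with b hconst hMb
  have htail : ‖∫ s in M..b, g s‖ ≤ ε / 2 * |b - M| :=
    intervalIntegral.norm_integral_le_of_norm_le_const fun s hs ↦ by
      simpa using (hM s (uIoc_of_le hMb ▸ hs).1.le).1
  rw [← intervalIntegral.integral_add_adjacent_intervals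
    (hg_int.intervalIntegrable_of_Ici le_rfl haM) (hg_int.intervalIntegrable_of_Ici haM
      (haM.trans hMb))]
  calc ‖(∫ s in a..M, g s) + ∫ s in M..b, g s‖
      ≤ ε / 2 * ‖id b‖ + ε / 2 * |b - M| := (norm_add_le _ _).trans (add_le_add hconst htail)
    _ ≤ ε * ‖id b‖ := by
      rw [id, Real.norm_eq_abs, abs_of_nonneg (hM0.trans hMb), abs_of_nonneg (sub_nonneg.2 hMb)]
      nlinarith

theorem tendsto_inv_smul_intervalIntegral_smul_of_integrableOn {g : ℝ → E} {a : ℝ}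
    (ha : 0 ≤ a) (hg : IntegrableOn g (Ioi a)) :
    Tendsto (fun b ↦ b⁻¹ • ∫ s in a..b, s • g s) atTop (𝓝 0) := by
  set G : ℝ → ℝ → E := fun b ↦ (Iic b).indicator fun s ↦ (b⁻¹ * s) • g s
  have hG : ∀ b ≥ a, b⁻¹ • ∫ s in a..b, s • g s = ∫ s in Ioi a, G b s := by
    intro b hb
    rw [intervalIntegral.integral_of_le hb, ← integral_smul,
      setIntegral_indicator measurableSet_Iic, Ioi_inter_Iic]
    simp_rw [smul_smul]
  have hlim : Tendsto (fun b ↦ ∫ s in Ioi a, G b s) atTop (𝓝 (∫ _ in Ioi a, (0 : E))) := by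
    refine tendsto_integral_filter_of_dominated_convergence (fun s ↦ ‖g s‖)
      (Eventually.of_forall fun b ↦ ?_) ?_ hg.norm
      (Eventually.of_forall fun s ↦ ?_)
    · exact ((continuous_const.mul continuous_id).aestronglyMeasurable.smul
        hg.aestronglyMeasurable).indicator measurableSet_Iic
    · filter_upwards [eventually_gt_atTop 0] with b hb
      refine ae_restrict_of_forall_mem measurableSet_Ioi fun s hs ↦ ?_
      simp only [G]
      by_cases hsb : s ∈ Iic b
      · rw [indicator_of_mem hsb, norm_smul, Real.norm_eq_abs,
          abs_of_nonneg (mul_nonneg (inv_nonneg.2 hb.le) (ha.trans hs.le))]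
        exact mul_le_of_le_one_left (norm_nonneg _) ((inv_mul_le_one₀ hb).2 hsb)
      · rw [indicator_of_notMem hsb, norm_zero]
        exact norm_nonneg _
    · have : Tendsto (fun b ↦ (b⁻¹ * s) • g s) atTop (𝓝 0) := by
        simpa using (tendsto_inv_atTop_zero.mul_const s).smul_const (g s)
      exact this.congr' (eventually_ge_atTop s |>.mono fun b hb ↦ (indicator_of_mem hb _).symm)
  simpa using hlim.congr' (eventually_ge_atTop a |>.mono fun b hb ↦ (hG b hb).symm)

theorem smul_eq_smul_add_intervalIntegral_of_hasDerivAt [CompleteSpace E] {F f : ℝ → E}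
    {a b : ℝ} (ha : 0 < a) (hab : a ≤ b)
    (hF : ∀ s ∈ Icc a b, HasDerivAt F (-s⁻¹ • F s + f s) s)
    (hf : IntervalIntegrable (fun s ↦ s • f s) volume a b) :
    b • F b = a • F a + ∫ s in a..b, s • f s := by
  have hderiv : ∀ s ∈ uIcc a b, HasDerivAt (fun x ↦ x • F x) (s • f s) s := by
    intro s hs
    rw [uIcc_of_le hab] at hs
    have hs0 : s ≠ 0 := (ha.trans_le hs.1).ne'
    refine ((hasDerivAt_id' s).smul (hF s hs)).congr_deriv ?_
    rw [smul_add, smul_smul, mul_neg, mul_inv_cancel₀ hs0]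
    module
  rw [intervalIntegral.integral_eq_sub_of_hasDerivAt hderiv hf]
  abel

theorem tendsto_zero_of_hasDerivAt_neg_inv_smul_add [CompleteSpace E] {F r h : ℝ → E} {a : ℝ}
    (hF : ∀ s > a, HasDerivAt F (-s⁻¹ • F s + r s + h s) s) (hr_meas : AEStronglyMeasurable r)
    (hr : Tendsto (fun s ↦ s • r s) atTop (𝓝 0)) (hh : IntegrableOn h (Ioi a)) :
    Tendsto F atTop (𝓝 0) := by
  obtain ⟨c, hc⟩ := eventually_atTop.1 <|
    (hr.eventually (Metric.closedBall_mem_nhds 0 one_pos)).and (eventually_gt_atTop (max a 0))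
  have hac : a < c := (le_max_left _ _).trans_lt (hc c le_rfl).2
  have hc0 : 0 < c := (le_max_right _ _).trans_lt (hc c le_rfl).2
  have hrc : LocallyIntegrableOn (fun s ↦ s • r s) (Ici c) :=
    locallyIntegrableOn_Ici_of_norm_le (continuous_id.aestronglyMeasurable.smul hr_meas)
      fun s hs ↦ by simpa using (hc s hs).1
  have hhc : IntegrableOn h (Ioi c) := hh.mono_set (Ioi_subset_Ioi hac.le)
  have hsol : ∀ b ≥ c, F b = b⁻¹ • (c • F c) +
      (b⁻¹ • ∫ s in c..b, s • r s) + b⁻¹ • ∫ s in c..b, s • h s := by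
    intro b hb
    have hrb : IntervalIntegrable (fun s ↦ s • r s) volume c b :=
      hrc.intervalIntegrable_of_Ici le_rfl hb
    have hhb : IntervalIntegrable (fun s ↦ s • h s) volume c b :=
      ((intervalIntegrable_iff_integrableOn_Ioc_of_le hb).2
        (hhc.mono_set Ioc_subset_Ioi_self)).continuousOn_smul continuousOn_id
    have hint := smul_eq_smul_add_intervalIntegral_of_hasDerivAt (f := r + h) hc0 hb
      (fun s hs ↦ by simpa only [Pi.add_apply, add_assoc] using hF s (hac.trans_le hs.1))
      (by simpa only [Pi.add_apply, smul_add] using hrb.add hhb)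
    calc F b = b⁻¹ • (b • F b) := by
          rw [smul_smul, inv_mul_cancel₀ (hc0.trans_le hb).ne', one_smul]
      _ = b⁻¹ • (c • F c + ∫ s in c..b, s • r s + s • h s) := by
        simp only [hint, Pi.add_apply, smul_add]
      _ = _ := by rw [intervalIntegral.integral_add hrb hhb, smul_add, smul_add, add_assoc]
  have hlim := ((tendsto_inv_atTop_zero.smul_const (c • F c)).add
    (tendsto_inv_smul_intervalIntegral_of_tendsto_zero hrc hr)).add
    (tendsto_inv_smul_intervalIntegral_smul_of_integrableOn hc0.le hhc)
  simpa using hlim.congr' (eventually_ge_atTop c |>.mono fun b hb ↦ (hsol b hb).symm)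

/-- ODE integration step concluding the proof of Lemma E.1: if `F : (1,∞) → ℝ³` satisfies
`F' = −λ⁻¹ F + r + h` with `λ|r(λ)| → 0` and `∫₁^∞ |h| < ∞`, then `F(λ) → 0` as `λ → ∞`. -/
theorem ode_integration_step
    (F r h : ℝ → E3)
    (hr_meas : Measurable r) (hh_meas : Measurable h)
    (hF : ∀ lam : ℝ, 1 < lam →
      HasDerivAt F (-lam⁻¹ • F lam + r lam + h lam) lam)
    (hr : Tendsto (fun lam : ℝ => lam * ‖r lam‖) atTop (nhds 0))
    (hh : IntegrableOn (fun lam : ℝ => ‖h lam‖) (Set.Ioi (1 : ℝ))) :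
    Tendsto F atTop (nhds (0 : E3)) := by
  have hr' : Tendsto (fun s ↦ s • r s) atTop (𝓝 0) := by
    rw [tendsto_zero_iff_norm_tendsto_zero]
    refine hr.congr' (eventually_ge_atTop 0 |>.mono fun s hs ↦ ?_)
    change s * ‖r s‖ = ‖s • r s‖
    rw [norm_smul, Real.norm_eq_abs, abs_of_nonneg hs]
  exact tendsto_zero_of_hasDerivAt_neg_inv_smul_add hF hr_meas.aestronglyMeasurable hr'
    ((integrable_norm_iff hh_meas.aestronglyMeasurable).1 hh)
end
end

section
/- Let τ ∈ (1/2, 1] and let σ be a C² field of symmetric 3×3 matrices on {x ∈ ℝ³ : |x| > 1/2} such that |∂_J σ(x)| ≤ C |x|^{−τ−|J|} for every multi-index J with |J| ≤ 2 and some constant C > 0. Let g(x) = Id + σ(x), which is positive definite for |x| sufficiently large, and let R[g] denote the scalar curvature of g computed in coordinates (see context). Then there is a constant C' > 0 such that, for all sufficiently large |x|, | R[g](x) − (div div σ − Δ(tr σ))(x) | ≤ C' |x|^{−2−2τ}. -/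
/-!
Write `g = 1 + σ` and let `Γₗᵢⱼ = ½ (∂ᵢσⱼₗ + ∂ⱼσᵢₗ - ∂ₗσᵢⱼ)` be the Christoffel symbols of the
first kind, so that `Γᵏᵢⱼ = Σₗ gᵏˡ Γₗᵢⱼ`. Once the entries of `σ` are at most `1/6`, `g` is
positive definite, `g⁻¹ - 1 = O(|σ|)` and `∂g⁻¹ = -g⁻¹ (∂σ) g⁻¹ = O(|∂σ|)`. Hence
`∂Γᵏᵢⱼ = ∂Γₖᵢⱼ + O(|σ| |∂²σ| + |∂σ|²)` and `ΓΓ = O(|∂σ|²)`, so the Ricci tensor differs from its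
linearization `Σₖ (∂ₖΓₖᵢⱼ - ∂ᵢΓₖₖⱼ)` by `O(|∂σ|² + |σ| |∂²σ|)`. Contracting with
`g⁻¹ = 1 + O(|σ|)` costs an error of the same size, and by the symmetry of `σ` the trace of the
linearization is `div div σ - Δ tr σ`. Under the decay hypotheses the error is `O(|x|^(-2-2τ))`.
-/

open MeasureTheory
open scoped RealInnerProductSpace

noncomputable section

/-- The exterior region `{x ∈ ℝ³ : |x| > 1/2}`. -/
def extRegion : Set E3 := {x : E3 | 1 / 2 < ‖x‖}

/-- The `i`-th standard basis vector of `ℝ³`. -/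
def ev (i : Fin 3) : E3 := EuclideanSpace.single i 1

/-- Euclidean partial derivative `∂ᵢ f`. -/
def pd (f : E3 → ℝ) (i : Fin 3) (x : E3) : ℝ := fderiv ℝ f x (ev i)

/-- Pointwise trace `tr σ`. -/
def trS (σ : E3 → Matrix (Fin 3) (Fin 3) ℝ) (x : E3) : ℝ := (σ x).trace

/-- `j`-th component of `div σ`, i.e. `Σᵢ ∂ᵢ σᵢⱼ`. -/
def divS (σ : E3 → Matrix (Fin 3) (Fin 3) ℝ) (j : Fin 3) (x : E3) : ℝ :=
  ∑ i, pd (fun y => σ y i j) i x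

/-- `div div σ = Σᵢⱼ ∂ᵢ∂ⱼ σᵢⱼ`. -/
def divdivS (σ : E3 → Matrix (Fin 3) (Fin 3) ℝ) (x : E3) : ℝ :=
  ∑ j, pd (divS σ j) j x

/-- Euclidean Laplacian. -/
def lap (f : E3 → ℝ) (x : E3) : ℝ := ∑ i, pd (pd f i) i x

/-- The metric `g = Id + σ` as a matrix field. -/
def gmat (σ : E3 → Matrix (Fin 3) (Fin 3) ℝ) (x : E3) : Matrix (Fin 3) (Fin 3) ℝ :=
  1 + σ x

/-- Christoffel symbols `Γ^k_{ij}` of `g = Id + σ` in coordinates. -/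
def Gam (σ : E3 → Matrix (Fin 3) (Fin 3) ℝ) (k i j : Fin 3) (x : E3) : ℝ :=
  (1 / 2) * ∑ l, (gmat σ x)⁻¹ k l *
    (pd (fun y => gmat σ y j l) i x + pd (fun y => gmat σ y i l) j x
      - pd (fun y => gmat σ y i j) l x)

/-- Ricci curvature `Ric_{ij}` of `g = Id + σ` in coordinates. -/
def Ricci (σ : E3 → Matrix (Fin 3) (Fin 3) ℝ) (i j : Fin 3) (x : E3) : ℝ :=
  (∑ k, (pd (fun y => Gam σ k i j y) k x - pd (fun y => Gam σ k k j y) i x))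
    + ∑ k, ∑ l, (Gam σ k k l x * Gam σ l i j x - Gam σ k i l x * Gam σ l k j x)

/-- Scalar curvature `R[g] = Σᵢⱼ g^{ij} Ric_{ij}` of `g = Id + σ`. -/
def scalCurv (σ : E3 → Matrix (Fin 3) (Fin 3) ℝ) (x : E3) : ℝ :=
  ∑ i, ∑ j, (gmat σ x)⁻¹ i j * Ricci σ i j x

open Filter Topology

section PartialDerivatives

variable {f g : E3 → ℝ} {x : E3} {i j : Fin 3}

lemma pd_congr_of_eventuallyEq (h : f =ᶠ[𝓝 x] g) : pd f i x = pd g i x := by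
  rw [pd, pd, h.fderiv_eq]

lemma pd_add (hf : DifferentiableAt ℝ f x) (hg : DifferentiableAt ℝ g x) :
    pd (fun y => f y + g y) i x = pd f i x + pd g i x := by
  simp [pd, fderiv_fun_add hf hg]

lemma pd_sub (hf : DifferentiableAt ℝ f x) (hg : DifferentiableAt ℝ g x) :
    pd (fun y => f y - g y) i x = pd f i x - pd g i x := by
  simp [pd, fderiv_fun_sub hf hg]

lemma pd_mul (hf : DifferentiableAt ℝ f x) (hg : DifferentiableAt ℝ g x) :
    pd (fun y => f y * g y) i x = f x * pd g i x + g x * pd f i x := by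
  simp [pd, fderiv_fun_mul hf hg]

lemma pd_const_mul (c : ℝ) (hf : DifferentiableAt ℝ f x) :
    pd (fun y => c * f y) i x = c * pd f i x := by
  simp [pd, fderiv_const_mul hf]

lemma pd_const_add (c : ℝ) : pd (fun y => c + f y) i x = pd f i x := by
  simp [pd, fderiv_const_add]

lemma pd_sum {ι : Type*} (s : Finset ι) (F : ι → E3 → ℝ)
    (hF : ∀ k ∈ s, DifferentiableAt ℝ (F k) x) :
    pd (fun y => ∑ k ∈ s, F k y) i x = ∑ k ∈ s, pd (F k) i x := by
  simp [pd, fderiv_fun_sum hF]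

lemma differentiableAt_pd (hf : ContDiffAt ℝ 2 f x) : DifferentiableAt ℝ (pd f i) x :=
  ((hf.fderiv_right (m := 1) (by norm_num)).differentiableAt (by norm_num)).clm_apply
    (differentiableAt_const _)

lemma pd_pd_eq_fderiv_fderiv (hf : ContDiffAt ℝ 2 f x) :
    pd (pd f j) i x = fderiv ℝ (fderiv ℝ f) x (ev i) (ev j) := by
  have hd := (hf.fderiv_right (m := 1) (by norm_num)).differentiableAt (by norm_num)
  change fderiv ℝ (fun y => fderiv ℝ f y (ev j)) x (ev i) = _
  simp [fderiv_clm_apply hd (differentiableAt_const _)]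

lemma norm_ev (i : Fin 3) : ‖ev i‖ = 1 := by simp [ev]

lemma abs_pd_le : |pd f i x| ≤ ‖iteratedFDeriv ℝ 1 f x‖ := by
  have := (iteratedFDeriv ℝ 1 f x).le_opNorm ![ev i]
  simpa [iteratedFDeriv_one_apply, pd, norm_ev] using this

lemma abs_pd_pd_le (hf : ContDiffAt ℝ 2 f x) :
    |pd (pd f j) i x| ≤ ‖iteratedFDeriv ℝ 2 f x‖ := by
  have := (iteratedFDeriv ℝ 2 f x).le_opNorm ![ev i, ev j]
  simpa [iteratedFDeriv_two_apply, pd_pd_eq_fderiv_fderiv hf, norm_ev] using this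

end PartialDerivatives

section EntrywiseBounds

lemma abs_mul_le_mul_of_abs_le {a b A B : ℝ} (ha : |a| ≤ A) (hb : |b| ≤ B) :
    |a * b| ≤ A * B := by
  rw [abs_mul]
  exact mul_le_mul ha hb (abs_nonneg _) ((abs_nonneg _).trans ha)

lemma abs_sum_le_card_mul {ι : Type*} [Fintype ι] {f : ι → ℝ} {B : ℝ} (h : ∀ k, |f k| ≤ B) :
    |∑ k, f k| ≤ Fintype.card ι * B :=
  (Finset.abs_sum_le_sum_abs _ _).trans <| by
    simpa using Finset.sum_le_card_nsmul Finset.univ (fun k => |f k|) B fun k _ => h k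

lemma abs_half_mul_add_sub_le {a b c D : ℝ} (ha : |a| ≤ D) (hb : |b| ≤ D) (hc : |c| ≤ D) :
    |1 / 2 * (a + b - c)| ≤ 3 / 2 * D := by
  obtain ⟨ha₁, ha₂⟩ := abs_le.1 ha
  obtain ⟨hb₁, hb₂⟩ := abs_le.1 hb
  obtain ⟨hc₁, hc₂⟩ := abs_le.1 hc
  rw [abs_le]
  constructor <;> linarith

variable {m n p : Type*} [Fintype n]

lemma abs_mul_apply_le {A : Matrix m n ℝ} {B : Matrix n p ℝ} {α β : ℝ}
    (hA : ∀ a b, |A a b| ≤ α) (hB : ∀ a b, |B a b| ≤ β) (k : m) (l : p) :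
    |(A * B) k l| ≤ Fintype.card n * (α * β) := by
  rw [Matrix.mul_apply]
  calc |∑ a, A k a * B a l| ≤ ∑ a, |A k a * B a l| := Finset.abs_sum_le_sum_abs _ _
    _ ≤ ∑ _a : n, α * β :=
        Finset.sum_le_sum fun a _ => abs_mul_le_mul_of_abs_le (hA k a) (hB a l)
    _ = Fintype.card n * (α * β) := by simp

variable [DecidableEq n] {s : Matrix n n ℝ} {ε : ℝ}

lemma posDef_one_add (hsym : s.IsSymm) (hs : ∀ a b, |s a b| ≤ ε)
    (hε : Fintype.card n * ε < 1) : (1 + s).PosDef := by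
  rw [Matrix.posDef_iff_dotProduct_mulVec]
  refine ⟨Matrix.isSymm_one.add hsym, fun v hv => ?_⟩
  obtain ⟨c, hc⟩ := Function.ne_iff.1 hv
  have hε0 : 0 ≤ ε := (abs_nonneg _).trans (hs c c)
  have hv2 : 0 < ∑ a, v a ^ 2 := Finset.sum_pos' (fun a _ => sq_nonneg (v a))
    ⟨c, Finset.mem_univ _, by simpa [sq_pos_iff] using hc⟩
  have hquad : |∑ a, ∑ b, v a * s a b * v b| ≤ Fintype.card n * ε * ∑ a, v a ^ 2 := by
    calc |∑ a, ∑ b, v a * s a b * v b| ≤ ∑ a, ∑ b, |v a * s a b * v b| :=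
          (Finset.abs_sum_le_sum_abs _ _).trans
            (Finset.sum_le_sum fun a _ => Finset.abs_sum_le_sum_abs _ _)
      _ ≤ ∑ a, ∑ b, ε * (|v a| * |v b|) := by
          gcongr with a _ b _
          rw [abs_mul, abs_mul, mul_right_comm, mul_comm]
          exact mul_le_mul_of_nonneg_right (hs a b) (by positivity)
      _ = ε * (∑ a, |v a|) ^ 2 := by
          rw [sq, Finset.sum_mul_sum, Finset.mul_sum]
          simp_rw [Finset.mul_sum]
      _ ≤ ε * (Fintype.card n * ∑ a, |v a| ^ 2) := by
          gcongr
          exact sq_sum_le_card_mul_sum_sq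
      _ = Fintype.card n * ε * ∑ a, v a ^ 2 := by simp only [sq_abs]; ring
  have hexpand : dotProduct (star v) ((1 + s).mulVec v)
      = ∑ a, v a ^ 2 + ∑ a, ∑ b, v a * s a b * v b := by
    simp [dotProduct, Matrix.mulVec, Matrix.add_apply, Matrix.one_apply, add_mul, mul_add,
      Finset.sum_add_distrib, Finset.mul_sum, sq, mul_assoc]
  rw [hexpand]
  nlinarith [abs_le.1 hquad]

lemma inv_one_add_eq (hdet : IsUnit (1 + s).det) : (1 + s)⁻¹ = 1 - (1 + s)⁻¹ * s := by
  have h := Matrix.nonsing_inv_mul (1 + s) hdet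
  rw [Matrix.mul_add, Matrix.mul_one] at h
  exact eq_sub_of_add_eq h

lemma abs_inv_one_add_apply_le (hs : ∀ a b, |s a b| ≤ ε)
    (hε : 2 * Fintype.card n * ε ≤ 1) (hdet : IsUnit (1 + s).det) (k l : n) :
    |(1 + s)⁻¹ k l| ≤ 2 := by
  have : Nonempty (n × n) := ⟨(k, l)⟩
  obtain ⟨q, hq⟩ := Finite.exists_max fun q : n × n => |(1 + s)⁻¹ q.1 q.2|
  set M := |(1 + s)⁻¹ q.1 q.2|
  -- `M` is the largest entry of `(1 + s)⁻¹ = 1 - (1 + s)⁻¹ * s`, so `M ≤ 1 + M / 2`.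
  have hM : M ≤ 1 + Fintype.card n * (M * ε) := by
    calc M = |(1 : Matrix n n ℝ) q.1 q.2 - ((1 + s)⁻¹ * s) q.1 q.2| := by
          rw [← Matrix.sub_apply, ← inv_one_add_eq hdet]
      _ ≤ |(1 : Matrix n n ℝ) q.1 q.2| + |((1 + s)⁻¹ * s) q.1 q.2| := abs_sub _ _
      _ ≤ 1 + Fintype.card n * (M * ε) := by
          gcongr
          · rw [Matrix.one_apply]; split_ifs <;> simp
          · exact abs_mul_apply_le (fun a b => hq (a, b)) hs _ _
  have hε0 : 0 ≤ ε := (abs_nonneg _).trans (hs k l)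
  nlinarith [hq (k, l), abs_nonneg ((1 + s)⁻¹ q.1 q.2)]

lemma abs_inv_one_add_sub_one_apply_le (hs : ∀ a b, |s a b| ≤ ε)
    (hε : 2 * Fintype.card n * ε ≤ 1) (hdet : IsUnit (1 + s).det) (k l : n) :
    |((1 + s)⁻¹ - 1) k l| ≤ 2 * Fintype.card n * ε := by
  have h : (1 + s)⁻¹ - 1 = -((1 + s)⁻¹ * s) := by
    conv_lhs => rw [inv_one_add_eq hdet]
    abel
  rw [h, Matrix.neg_apply, abs_neg]
  linarith [abs_mul_apply_le (abs_inv_one_add_apply_le hs hε hdet) hs k l]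

end EntrywiseBounds

section MatrixInverse

variable {E : Type*} [NormedAddCommGroup E] [NormedSpace ℝ E] {n : Type*} [Fintype n]
  [DecidableEq n] {G : E → Matrix n n ℝ} {x : E}

lemma differentiableAt_matrix_det (hG : ∀ a b, DifferentiableAt ℝ (fun y => G y a b) x) :
    DifferentiableAt ℝ (fun y => (G y).det) x := by
  simp only [Matrix.det_apply]
  fun_prop

lemma differentiableAt_matrix_inv_apply (hG : ∀ a b, DifferentiableAt ℝ (fun y => G y a b) x)
    (hdet : (G x).det ≠ 0) (k l : n) : DifferentiableAt ℝ (fun y => (G y)⁻¹ k l) x := by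
  have hadj : DifferentiableAt ℝ (fun y => (G y).adjugate k l) x := by
    simp only [Matrix.adjugate_apply]
    refine differentiableAt_matrix_det fun a b => ?_
    by_cases h : a = l <;> simp [Matrix.updateRow_apply, h, hG]
  have h := ((differentiableAt_matrix_det hG).inv hdet).fun_mul hadj
  simpa [Matrix.inv_def] using h

end MatrixInverse

lemma pd_matrix_inv_apply {n : Type*} [Fintype n] [DecidableEq n] {G : E3 → Matrix n n ℝ}
    {x : E3} (hG : ∀ᶠ y in 𝓝 x, ∀ a b, DifferentiableAt ℝ (fun z => G z a b) y)
    (hdet : (G x).det ≠ 0) (i : Fin 3) (k l : n) :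
    pd (fun y => (G y)⁻¹ k l) i x =
      -((G x)⁻¹ * Matrix.of (fun a b => pd (fun y => G y a b) i x) * (G x)⁻¹) k l := by
  set dG := Matrix.of fun a b => pd (fun y => G y a b) i x
  set dA := Matrix.of fun a b => pd (fun y => (G y)⁻¹ a b) i x
  have hGx := hG.self_of_nhds
  have hAx := differentiableAt_matrix_inv_apply hGx hdet
  have hinv : ∀ᶠ y in 𝓝 x, (G y)⁻¹ * G y = 1 := by
    filter_upwards [(differentiableAt_matrix_det hGx).continuousAt.eventually_ne hdet] with y hy
    exact Matrix.nonsing_inv_mul _ (isUnit_iff_ne_zero.2 hy)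
  have hderiv_prod : dA * G x + (G x)⁻¹ * dG = 0 := by
    ext a b
    have h0 : pd (fun y => ((G y)⁻¹ * G y) a b) i x = 0 := by
      rw [pd_congr_of_eventuallyEq (hinv.mono fun y hy => congrFun (congrFun hy a) b)]
      simp [pd]
    simp only [Matrix.mul_apply] at h0
    rw [pd_sum Finset.univ (fun c y => (G y)⁻¹ a c * G y c b)
      fun c _ => (hAx a c).fun_mul (hGx c b)] at h0
    simp only [pd_mul (hAx _ _) (hGx _ _)] at h0
    simp only [Matrix.add_apply, Matrix.mul_apply, Matrix.zero_apply, dA, dG, Matrix.of_apply,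
      ← Finset.sum_add_distrib, ← h0]
    exact Finset.sum_congr rfl fun c _ => by ring
  have hdA : dA = -((G x)⁻¹ * dG * (G x)⁻¹) := by
    calc dA = (dA * G x) * (G x)⁻¹ := by
          rw [Matrix.mul_assoc, Matrix.mul_nonsing_inv _ (isUnit_iff_ne_zero.2 hdet),
            Matrix.mul_one]
      _ = -((G x)⁻¹ * dG * (G x)⁻¹) := by
          rw [eq_neg_of_add_eq_zero_left hderiv_prod, Matrix.neg_mul]
  exact congrFun (congrFun hdA k) l

def christoffelFirst (σ : E3 → Matrix (Fin 3) (Fin 3) ℝ) (l i j : Fin 3) (y : E3) : ℝ :=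
  (1 / 2) * (pd (fun z => σ z j l) i y + pd (fun z => σ z i l) j y - pd (fun z => σ z i j) l y)

def linearizedRicci (σ : E3 → Matrix (Fin 3) (Fin 3) ℝ) (i j : Fin 3) (x : E3) : ℝ :=
  ∑ k, (pd (christoffelFirst σ k i j) k x - pd (christoffelFirst σ k k j) i x)

section Curvature

variable {σ : E3 → Matrix (Fin 3) (Fin 3) ℝ} {x : E3}

lemma pd_gmat_apply (i j k : Fin 3) (y : E3) :
    pd (fun z => gmat σ z i j) k y = pd (fun z => σ z i j) k y :=
  pd_const_add _

lemma Gam_eq_sum_inv_mul_christoffelFirst (k i j : Fin 3) (y : E3) :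
    Gam σ k i j y = ∑ l, (gmat σ y)⁻¹ k l * christoffelFirst σ l i j y := by
  simp only [Gam, christoffelFirst, pd_gmat_apply, Finset.mul_sum]
  exact Finset.sum_congr rfl fun l _ => by ring

lemma eventually_differentiableAt_apply (hreg : ∀ i j, ContDiffAt ℝ 2 (fun y => σ y i j) x) :
    ∀ᶠ y in 𝓝 x, ∀ i j, DifferentiableAt ℝ (fun z => σ z i j) y := by
  simp only [eventually_all]
  exact fun i j => ((hreg i j).eventually (by simp)).mono fun y hy => hy.differentiableAt (by simp)

lemma differentiableAt_christoffelFirst (hreg : ∀ i j, ContDiffAt ℝ 2 (fun y => σ y i j) x)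
    (l i j : Fin 3) : DifferentiableAt ℝ (christoffelFirst σ l i j) x :=
  ((differentiableAt_pd (hreg j l)).add (differentiableAt_pd (hreg i l))
    |>.sub (differentiableAt_pd (hreg i j))).const_mul _

lemma pd_christoffelFirst (hreg : ∀ i j, ContDiffAt ℝ 2 (fun y => σ y i j) x) (m l i j : Fin 3) :
    pd (christoffelFirst σ l i j) m x = (1 / 2) * (pd (pd (fun z => σ z j l) i) m x
      + pd (pd (fun z => σ z i l) j) m x - pd (pd (fun z => σ z i j) l) m x) := by
  have hjl := differentiableAt_pd (i := i) (hreg j l)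
  have hil := differentiableAt_pd (i := j) (hreg i l)
  have hij := differentiableAt_pd (i := l) (hreg i j)
  unfold christoffelFirst
  rw [pd_const_mul _ ((hjl.fun_add hil).fun_sub hij), pd_sub (hjl.fun_add hil) hij, pd_add hjl hil]

lemma sum_linearizedRicci_self (hsym : ∀ y, (σ y).IsSymm)
    (hreg : ∀ i j, ContDiffAt ℝ 2 (fun y => σ y i j) x) :
    ∑ i, linearizedRicci σ i i x = divdivS σ x - lap (trS σ) x := by
  have hdiff := eventually_differentiableAt_apply hreg
  have hswap : ∀ i j, (fun z => σ z i j) = fun z => σ z j i :=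
    fun i j => funext fun z => (hsym z).apply j i
  have hdivdiv : divdivS σ x = ∑ j, ∑ i, pd (pd (fun z => σ z i j) i) j x :=
    Finset.sum_congr rfl fun j _ =>
      pd_sum _ (fun i y => pd (fun z => σ z i j) i y) fun i _ => differentiableAt_pd (hreg i j)
  have hlap : lap (trS σ) x = ∑ i, ∑ k, pd (pd (fun z => σ z k k) i) i x := by
    refine Finset.sum_congr rfl fun i _ => ?_
    have htr : pd (trS σ) i =ᶠ[𝓝 x] fun y => ∑ k, pd (fun z => σ z k k) i y := by
      filter_upwards [hdiff] with y hy
      change pd (fun z => ∑ k, σ z k k) i y = _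
      exact pd_sum _ (fun k z => σ z k k) fun k _ => hy k k
    rw [pd_congr_of_eventuallyEq htr,
      pd_sum _ (fun k y => pd (fun z => σ z k k) i y) fun k _ => differentiableAt_pd (hreg k k)]
  simp only [linearizedRicci, pd_christoffelFirst hreg, hdivdiv, hlap, Fin.sum_univ_three]
  rw [hswap 1 0, hswap 2 0, hswap 2 1]
  ring

end Curvature

section Estimates

variable {σ : E3 → Matrix (Fin 3) (Fin 3) ℝ} {x : E3} {ε D₁ D₂ : ℝ}

lemma abs_christoffelFirst_le (h₁ : ∀ k i j, |pd (fun y => σ y i j) k x| ≤ D₁) (l i j : Fin 3) :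
    |christoffelFirst σ l i j x| ≤ 3 / 2 * D₁ :=
  abs_half_mul_add_sub_le (h₁ i j l) (h₁ j i l) (h₁ l i j)

lemma abs_pd_christoffelFirst_le (hreg : ∀ i j, ContDiffAt ℝ 2 (fun y => σ y i j) x)
    (h₂ : ∀ m k i j, |pd (pd (fun y => σ y i j) k) m x| ≤ D₂) (m l i j : Fin 3) :
    |pd (christoffelFirst σ l i j) m x| ≤ 3 / 2 * D₂ := by
  rw [pd_christoffelFirst hreg]
  exact abs_half_mul_add_sub_le (h₂ m i j l) (h₂ m j i l) (h₂ m l i j)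

lemma differentiableAt_gmat_apply (hreg : ∀ i j, ContDiffAt ℝ 2 (fun y => σ y i j) x) :
    ∀ᶠ y in 𝓝 x, ∀ i j, DifferentiableAt ℝ (fun z => gmat σ z i j) y :=
  (eventually_differentiableAt_apply hreg).mono fun _ hy i j =>
    (differentiableAt_const _).add (hy i j)

lemma abs_pd_inv_gmat_apply_le (hreg : ∀ i j, ContDiffAt ℝ 2 (fun y => σ y i j) x)
    (hdet : (gmat σ x).det ≠ 0) (hA : ∀ k l, |(gmat σ x)⁻¹ k l| ≤ 2)
    (h₁ : ∀ k i j, |pd (fun y => σ y i j) k x| ≤ D₁) (m k l : Fin 3) :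
    |pd (fun y => (gmat σ y)⁻¹ k l) m x| ≤ 36 * D₁ := by
  rw [pd_matrix_inv_apply (differentiableAt_gmat_apply hreg) hdet, abs_neg]
  have hdg : ∀ a b, |Matrix.of (fun a b => pd (fun y => gmat σ y a b) m x) a b| ≤ D₁ := by
    simpa [pd_gmat_apply] using fun a b => h₁ m a b
  have := abs_mul_apply_le (abs_mul_apply_le hA hdg) hA k l
  simp only [Fintype.card_fin, Nat.cast_ofNat] at this
  linarith

lemma abs_Gam_le (hA : ∀ k l, |(gmat σ x)⁻¹ k l| ≤ 2)
    (h₁ : ∀ k i j, |pd (fun y => σ y i j) k x| ≤ D₁) (k i j : Fin 3) :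
    |Gam σ k i j x| ≤ 9 * D₁ := by
  rw [Gam_eq_sum_inv_mul_christoffelFirst]
  have := abs_sum_le_card_mul fun l =>
    abs_mul_le_mul_of_abs_le (hA k l) (abs_christoffelFirst_le h₁ l i j)
  simp only [Fintype.card_fin, Nat.cast_ofNat] at this
  linarith

lemma pd_Gam (hreg : ∀ i j, ContDiffAt ℝ 2 (fun y => σ y i j) x) (hdet : (gmat σ x).det ≠ 0)
    (m k i j : Fin 3) :
    pd (fun y => Gam σ k i j y) m x = ∑ l, ((gmat σ x)⁻¹ k l * pd (christoffelFirst σ l i j) m x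
      + christoffelFirst σ l i j x * pd (fun y => (gmat σ y)⁻¹ k l) m x) := by
  have hA := differentiableAt_matrix_inv_apply (differentiableAt_gmat_apply hreg).self_of_nhds hdet
  have hΓ := differentiableAt_christoffelFirst hreg
  simp_rw [Gam_eq_sum_inv_mul_christoffelFirst]
  rw [pd_sum _ (fun l y => (gmat σ y)⁻¹ k l * christoffelFirst σ l i j y)
    fun l _ => (hA k l).fun_mul (hΓ l i j)]
  exact Finset.sum_congr rfl fun l _ => pd_mul (hA k l) (hΓ l i j)

lemma abs_pd_Gam_sub_pd_christoffelFirst_le (hreg : ∀ i j, ContDiffAt ℝ 2 (fun y => σ y i j) x)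
    (hdet : (gmat σ x).det ≠ 0) (hA : ∀ k l, |(gmat σ x)⁻¹ k l| ≤ 2)
    (hA₁ : ∀ k l, |((gmat σ x)⁻¹ - 1) k l| ≤ 6 * ε)
    (h₁ : ∀ k i j, |pd (fun y => σ y i j) k x| ≤ D₁)
    (h₂ : ∀ m k i j, |pd (pd (fun y => σ y i j) k) m x| ≤ D₂) (m k i j : Fin 3) :
    |pd (fun y => Gam σ k i j y) m x - pd (christoffelFirst σ k i j) m x|
      ≤ 162 * (D₁ ^ 2 + ε * D₂) := by
  have hδ : pd (christoffelFirst σ k i j) m x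
      = ∑ l, (1 : Matrix (Fin 3) (Fin 3) ℝ) k l * pd (christoffelFirst σ l i j) m x := by
    simp [Matrix.one_apply]
  rw [pd_Gam hreg hdet, hδ, ← Finset.sum_sub_distrib]
  have hterm : ∀ l, |(gmat σ x)⁻¹ k l * pd (christoffelFirst σ l i j) m x
      + christoffelFirst σ l i j x * pd (fun y => (gmat σ y)⁻¹ k l) m x
      - (1 : Matrix (Fin 3) (Fin 3) ℝ) k l * pd (christoffelFirst σ l i j) m x|
      ≤ 6 * ε * (3 / 2 * D₂) + 3 / 2 * D₁ * (36 * D₁) := fun l => by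
    rw [show ∀ a b c d e : ℝ, a * b + c * d - e * b = (a - e) * b + c * d by intros; ring,
      ← Matrix.sub_apply]
    exact (abs_add_le _ _).trans (add_le_add
      (abs_mul_le_mul_of_abs_le (hA₁ k l) (abs_pd_christoffelFirst_le hreg h₂ m l i j))
      (abs_mul_le_mul_of_abs_le (abs_christoffelFirst_le h₁ l i j)
        (abs_pd_inv_gmat_apply_le hreg hdet hA h₁ m k l)))
  have hε : 0 ≤ ε := by linarith [abs_nonneg (((gmat σ x)⁻¹ - 1) 0 0), hA₁ 0 0]
  have hD₂ : 0 ≤ D₂ := (abs_nonneg _).trans (h₂ 0 0 0 0)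
  have := abs_sum_le_card_mul hterm
  simp only [Fintype.card_fin, Nat.cast_ofNat] at this
  nlinarith [mul_nonneg hε hD₂]

lemma abs_linearizedRicci_le (hreg : ∀ i j, ContDiffAt ℝ 2 (fun y => σ y i j) x)
    (h₂ : ∀ m k i j, |pd (pd (fun y => σ y i j) k) m x| ≤ D₂) (i j : Fin 3) :
    |linearizedRicci σ i j x| ≤ 9 * D₂ := by
  have := abs_sum_le_card_mul fun k => (abs_sub _ _).trans (add_le_add
    (abs_pd_christoffelFirst_le hreg h₂ k k i j) (abs_pd_christoffelFirst_le hreg h₂ i k k j))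
  simp only [Fintype.card_fin, Nat.cast_ofNat] at this
  rw [linearizedRicci]
  linarith

lemma abs_Ricci_sub_linearizedRicci_le (hreg : ∀ i j, ContDiffAt ℝ 2 (fun y => σ y i j) x)
    (hdet : (gmat σ x).det ≠ 0) (hA : ∀ k l, |(gmat σ x)⁻¹ k l| ≤ 2)
    (hA₁ : ∀ k l, |((gmat σ x)⁻¹ - 1) k l| ≤ 6 * ε)
    (h₁ : ∀ k i j, |pd (fun y => σ y i j) k x| ≤ D₁)
    (h₂ : ∀ m k i j, |pd (pd (fun y => σ y i j) k) m x| ≤ D₂) (i j : Fin 3) :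
    |Ricci σ i j x - linearizedRicci σ i j x| ≤ 2430 * (D₁ ^ 2 + ε * D₂) := by
  have hdecomp : Ricci σ i j x - linearizedRicci σ i j x
      = ∑ k, ((pd (fun y => Gam σ k i j y) k x - pd (christoffelFirst σ k i j) k x)
          - (pd (fun y => Gam σ k k j y) i x - pd (christoffelFirst σ k k j) i x))
        + ∑ k, ∑ l, (Gam σ k k l x * Gam σ l i j x - Gam σ k i l x * Gam σ l k j x) := by
    simp only [Ricci, linearizedRicci, Fin.sum_univ_three]
    ring
  have hΓ := abs_pd_Gam_sub_pd_christoffelFirst_le hreg hdet hA hA₁ h₁ h₂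
  have hlin := abs_sum_le_card_mul fun k =>
    (abs_sub _ _).trans (add_le_add (hΓ k k i j) (hΓ i k k j))
  have hquad := abs_sum_le_card_mul fun k => abs_sum_le_card_mul fun l =>
    (abs_sub _ _).trans (add_le_add
      (abs_mul_le_mul_of_abs_le (abs_Gam_le hA h₁ k k l) (abs_Gam_le hA h₁ l i j))
      (abs_mul_le_mul_of_abs_le (abs_Gam_le hA h₁ k i l) (abs_Gam_le hA h₁ l k j)))
  simp only [Fintype.card_fin, Nat.cast_ofNat] at hlin hquad
  have hε : 0 ≤ ε := by linarith [abs_nonneg (((gmat σ x)⁻¹ - 1) 0 0), hA₁ 0 0]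
  have hD₂ : 0 ≤ D₂ := (abs_nonneg _).trans (h₂ 0 0 0 0)
  rw [hdecomp]
  refine (abs_add_le _ _).trans ?_
  nlinarith [mul_nonneg hε hD₂]

lemma scalCurv_sub_sum_linearizedRicci (x : E3) :
    scalCurv σ x - ∑ i, linearizedRicci σ i i x
      = ∑ i, ∑ j, ((gmat σ x)⁻¹ - 1) i j * Ricci σ i j x
        + ∑ i, (Ricci σ i i x - linearizedRicci σ i i x) := by
  simp only [scalCurv, Matrix.sub_apply, sub_mul, Finset.sum_sub_distrib, Matrix.one_apply,
    ite_mul, one_mul, zero_mul, Finset.sum_ite_eq, Finset.mem_univ, if_true]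
  ring

theorem abs_scalCurv_sub_le (hsym : ∀ y, (σ y).IsSymm)
    (hreg : ∀ i j, ContDiffAt ℝ 2 (fun y => σ y i j) x)
    (h₀ : ∀ i j, |σ x i j| ≤ ε) (hε : ε ≤ 1 / 6)
    (h₁ : ∀ k i j, |pd (fun y => σ y i j) k x| ≤ D₁)
    (h₂ : ∀ m k i j, |pd (pd (fun y => σ y i j) k) m x| ≤ D₂) :
    |scalCurv σ x - (divdivS σ x - lap (trS σ) x)| ≤ 30000 * (D₁ ^ 2 + ε * D₂) := by
  have hε₀ : 0 ≤ ε := (abs_nonneg _).trans (h₀ 0 0)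
  have hD₂ : 0 ≤ D₂ := (abs_nonneg _).trans (h₂ 0 0 0 0)
  have hδ : 0 ≤ D₁ ^ 2 + ε * D₂ := by positivity
  have hdet : (gmat σ x).det ≠ 0 :=
    (posDef_one_add (hsym x) h₀ (by simp; linarith)).det_pos.ne'
  have hsmall : 2 * Fintype.card (Fin 3) * ε ≤ 1 := by simp; linarith
  have hA : ∀ k l, |(gmat σ x)⁻¹ k l| ≤ 2 :=
    abs_inv_one_add_apply_le h₀ hsmall (isUnit_iff_ne_zero.2 hdet)
  have hA₁ : ∀ k l, |((gmat σ x)⁻¹ - 1) k l| ≤ 6 * ε := fun k l =>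
    (abs_inv_one_add_sub_one_apply_le h₀ hsmall (isUnit_iff_ne_zero.2 hdet) k l).trans_eq
      (by rw [Fintype.card_fin]; push_cast; ring)
  have hRic := abs_Ricci_sub_linearizedRicci_le hreg hdet hA hA₁ h₁ h₂
  have hRic' : ∀ i j, |Ricci σ i j x| ≤ 9 * D₂ + 2430 * (D₁ ^ 2 + ε * D₂) := fun i j => by
    linarith [abs_sub_abs_le_abs_sub (Ricci σ i j x) (linearizedRicci σ i j x), hRic i j,
      abs_linearizedRicci_le hreg h₂ i j]
  have hperturb := abs_sum_le_card_mul fun i => abs_sum_le_card_mul fun j =>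
    abs_mul_le_mul_of_abs_le (hA₁ i j) (hRic' i j)
  have hdiag := abs_sum_le_card_mul fun i => hRic i i
  simp only [Fintype.card_fin, Nat.cast_ofNat] at hperturb hdiag
  rw [← sum_linearizedRicci_self hsym hreg, scalCurv_sub_sum_linearizedRicci]
  refine (abs_add_le _ _).trans ?_
  nlinarith [mul_le_mul_of_nonneg_right hε hδ]

end Estimates

lemma isOpen_extRegion : IsOpen extRegion := isOpen_lt continuous_const continuous_norm

lemma eventually_gt_and_mul_rpow_neg_le {τ : ℝ} (hτ : 0 < τ) (C : ℝ) :
    ∀ᶠ r in atTop, 1 / 2 < r ∧ C * r ^ (-τ) ≤ 1 / 6 := by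
  have hlim : Tendsto (fun r : ℝ => C * r ^ (-τ)) atTop (𝓝 0) := by
    simpa using (tendsto_rpow_neg_atTop hτ).const_mul C
  exact (eventually_gt_atTop _).and (hlim.eventually_le_const (by norm_num))

lemma rpow_decay_sq_add_mul_eq {r : ℝ} (hr : 0 < r) (C τ : ℝ) :
    (C * r ^ (-τ - 1)) ^ 2 + C * r ^ (-τ) * (C * r ^ (-τ - 2)) = 2 * C ^ 2 * r ^ (-2 - 2 * τ) := by
  have h₁ : (r ^ (-τ - 1)) ^ 2 = r ^ (-2 - 2 * τ) := by
    rw [← Real.rpow_natCast, ← Real.rpow_mul hr.le]; ring_nf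
  have h₂ : r ^ (-τ) * r ^ (-τ - 2) = r ^ (-2 - 2 * τ) := by
    rw [← Real.rpow_add hr]; ring_nf
  linear_combination C ^ 2 * h₁ + C ^ 2 * h₂

theorem scalar_curvature_expansion_general
    (τ : ℝ) (hτ : τ ∈ Set.Ioc (1 / 2 : ℝ) 1)
    (σ : E3 → Matrix (Fin 3) (Fin 3) ℝ)
    (hsym : ∀ x, (σ x).IsSymm)
    (hreg : ∀ i j, ContDiffOn ℝ 2 (fun x => σ x i j) extRegion)
    (C : ℝ)
    (hbd : ∀ k : ℕ, k ≤ 2 → ∀ i j, ∀ x ∈ extRegion,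
      ‖iteratedFDerivWithin ℝ k (fun y => σ y i j) extRegion x‖ ≤ C * ‖x‖ ^ (-τ - (k : ℝ))) :
    ∃ C' > (0 : ℝ), ∃ r₀ : ℝ, ∀ x : E3, r₀ < ‖x‖ →
      (gmat σ x).PosDef ∧
      |scalCurv σ x - (divdivS σ x - lap (trS σ) x)| ≤ C' * ‖x‖ ^ (-2 - 2 * τ) := by
  obtain ⟨r₀, hr₀⟩ := eventually_atTop.1 (eventually_gt_and_mul_rpow_neg_le (by linarith [hτ.1]) C)
  refine ⟨60000 * C ^ 2 + 1, by positivity, r₀, fun x hx => ?_⟩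
  obtain ⟨hxU : x ∈ extRegion, hsmall⟩ := hr₀ ‖x‖ hx.le
  have hreg' : ∀ i j, ContDiffAt ℝ 2 (fun y => σ y i j) x :=
    fun i j => (hreg i j).contDiffAt (isOpen_extRegion.mem_nhds hxU)
  have hbd' : ∀ k : ℕ, k ≤ 2 → ∀ i j,
      ‖iteratedFDeriv ℝ k (fun y => σ y i j) x‖ ≤ C * ‖x‖ ^ (-τ - (k : ℝ)) := fun k hk i j => by
    rw [← iteratedFDerivWithin_of_isOpen k isOpen_extRegion hxU]
    exact hbd k hk i j x hxU
  have h₀ : ∀ i j, |σ x i j| ≤ C * ‖x‖ ^ (-τ) := fun i j => by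
    simpa using hbd' 0 (by norm_num) i j
  have h₁ : ∀ k i j, |pd (fun y => σ y i j) k x| ≤ C * ‖x‖ ^ (-τ - 1) := fun k i j =>
    abs_pd_le.trans (by simpa using hbd' 1 (by norm_num) i j)
  have h₂ : ∀ m k i j, |pd (pd (fun y => σ y i j) k) m x| ≤ C * ‖x‖ ^ (-τ - 2) := fun m k i j =>
    (abs_pd_pd_le (hreg' i j)).trans (by simpa using hbd' 2 le_rfl i j)
  refine ⟨posDef_one_add (hsym x) h₀ (by simp; linarith), ?_⟩
  have hr : 0 < ‖x‖ := by linarith [show (1 / 2 : ℝ) < ‖x‖ from hxU]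
  calc |scalCurv σ x - (divdivS σ x - lap (trS σ) x)|
      ≤ 30000 * ((C * ‖x‖ ^ (-τ - 1)) ^ 2 + C * ‖x‖ ^ (-τ) * (C * ‖x‖ ^ (-τ - 2))) :=
        abs_scalCurv_sub_le hsym hreg' h₀ hsmall h₁ h₂
    _ = 60000 * C ^ 2 * ‖x‖ ^ (-2 - 2 * τ) := by rw [rpow_decay_sq_add_mul_eq hr]; ring
    _ ≤ (60000 * C ^ 2 + 1) * ‖x‖ ^ (-2 - 2 * τ) := by
        gcongr
        linarith

/-- Expansion of the scalar curvature (Lemma F.3):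
`R[g] = div div σ − Δ tr σ + O(|x|^{−2−2τ})` for `g = Id + σ` asymptotically flat of rate `τ`. -/
theorem scalar_curvature_expansion
    (τ : ℝ) (hτ : τ ∈ Set.Ioc (1 / 2 : ℝ) 1)
    (σ : E3 → Matrix (Fin 3) (Fin 3) ℝ)
    (hsym : ∀ x, (σ x).IsSymm)
    (hreg : ∀ i j, ContDiffOn ℝ 2 (fun x => σ x i j) extRegion)
    (C : ℝ) (hC : 0 < C)
    (hbd : ∀ k : ℕ, k ≤ 2 → ∀ i j, ∀ x ∈ extRegion,
      ‖iteratedFDerivWithin ℝ k (fun y => σ y i j) extRegion x‖ ≤ C * ‖x‖ ^ (-τ - (k : ℝ))) :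
    ∃ C' > (0 : ℝ), ∃ r₀ : ℝ, ∀ x : E3, r₀ < ‖x‖ →
      (gmat σ x).PosDef ∧
      |scalCurv σ x - (divdivS σ x - lap (trS σ) x)| ≤ C' * ‖x‖ ^ (-2 - 2 * τ) :=
  scalar_curvature_expansion_general τ hτ σ hsym hreg C hbd
end
end
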